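/- arXiv:1712.10159 — 6 statements merged into one kernel-verified Lean document; each statement's English description precedes it below -/
import Mathlib

section
/- Let r, ν, γ, Γ, μ > 0 satisfy Γ − 2μ > 2γμ/ν, and let N* be as in the existence result for the coexistence equilibrium (the positive root of (r/ν)N² − (r−γ/2)N − μγ²/(Γ−2μ) = 0). Then the condition Γ − 2μ > 2γμ/ν is equivalent to √Δ_N < r + γ/2, where Δ_N = (r − γ/2)² + 4(r/ν)·μγ²/(Γ−2μ); and this in turn is equivalent to N* < ν. -/
theorem stmt_6 (r ν γ Γ μ : ℝ) (hr : 0 < r) (hν : 0 < ν) (hγ : 0 < γ)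
    (hμ : 0 < μ) (hΓμ : Γ > 2 * μ)
    (ΔN Nstar : ℝ)
    (hΔN : ΔN = (r - γ / 2) ^ 2 + 4 * (r / ν) * (μ * γ ^ 2 / (Γ - 2 * μ)))
    (hNs : Nstar = (ν / (2 * r)) * (r - γ / 2 + Real.sqrt ΔN)) :
    (Γ - 2 * μ > 2 * γ * μ / ν ↔ Real.sqrt ΔN < r + γ / 2) ∧
    (Real.sqrt ΔN < r + γ / 2 ↔ Nstar < ν) := by
  have hD : (0:ℝ) < Γ - 2 * μ := by linarith
  constructor
  · rw [Real.sqrt_lt' (by linarith : (0:ℝ) < r + γ / 2), hΔN]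
    have hrw : 4 * (r / ν) * (μ * γ ^ 2 / (Γ - 2 * μ)) =
        (4 * r * (μ * γ ^ 2)) / (ν * (Γ - 2 * μ)) := by
      field_simp
    rw [show (r + γ / 2) ^ 2 = (r - γ / 2) ^ 2 + 2 * r * γ by ring, hrw,
      add_lt_add_iff_left, div_lt_iff₀ (mul_pos hν hD), gt_iff_lt, div_lt_iff₀ hν]
    have h2rg : (0:ℝ) < 2 * r * γ := by positivity
    constructor <;> intro h
    · nlinarith [mul_lt_mul_of_pos_left h h2rg]
    · nlinarith [mul_pos hr hγ]
  · rw [hNs, div_mul_eq_mul_div, div_lt_iff₀ (by positivity : (0:ℝ) < 2 * r)]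
    constructor <;> intro h <;> nlinarith
end

section
/- Under the conditions Γ − 2μ > 2γμ/ν (with r, ν, γ, Γ, μ > 0), let N*, P*, Q* be the coexistence equilibrium quantities. Then the Jacobian entries of the reaction system at E* satisfy J*₁₂ = −γ²μ/(Q*(Γ−2μ)) < 0, J*₂₁ = (Γ−2μ)P*/(2Q*) > 0, and J*₂₂ = −μ(Γ−2μ)P*/(ΓQ*) < 0. -/
/-!
`N*` is the positive root of `(r/ν) N² - (r - γ/2) N - μγ²/(Γ - 2μ)`, and this quadratic is
negative at `2μγ/(Γ - 2μ)` exactly when `Γ - 2μ > 2γμ/ν`; hence `N* > 2μγ/(Γ - 2μ)`, which is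
`P* > 0`. Eliminating `N*` gives `Q* = Γγ/(Γ - 2μ) + (Γ - 2μ) P*/Γ > 0` and
`B*² - 4 N* P* = Q*²`, so the square root in the reaction terms is differentiable at `E*` with
value `Q*`. The partial derivatives of `B - √(B² - 4NP)` there are `4μγ/((Γ - 2μ) Q*)` in `P`
and `2(Γ - 2μ) P*/(Γ Q*)` in `N`, and the three Jacobian entries are read off from these.
-/

open Real

lemma lt_quadratic_root {a b c x : ℝ} (ha : 0 < a) (hx : a * x ^ 2 - b * x - c < 0) :
    x < (b + √(b ^ 2 + 4 * a * c)) / (2 * a) := by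
  rw [lt_div_iff₀ (by positivity), ← sub_lt_iff_lt_add']
  exact lt_sqrt_of_sq_lt (by nlinarith)

noncomputable def interactionTerm (γ N P : ℝ) : ℝ :=
  γ + N + P - √((γ + N + P) ^ 2 - 4 * N * P)

lemma interactionTerm_comm (γ N P : ℝ) : interactionTerm γ N P = interactionTerm γ P N := by
  unfold interactionTerm; ring_nf

lemma hasDerivAt_interactionTerm_right {γ N P : ℝ} (hD : (γ + N + P) ^ 2 - 4 * N * P ≠ 0) :
    HasDerivAt (fun p => interactionTerm γ N p)
      (1 - (γ + N + P - 2 * N) / √((γ + N + P) ^ 2 - 4 * N * P)) P := by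
  have hB : HasDerivAt (fun p => γ + N + p) 1 P := (hasDerivAt_id P).const_add _
  have hD' : HasDerivAt (fun p => (γ + N + p) ^ 2 - 4 * N * p) (2 * (γ + N + P) - 4 * N) P := by
    simpa using (hB.fun_pow 2).fun_sub ((hasDerivAt_id' P).const_mul (4 * N))
  refine (hB.fun_sub (hD'.sqrt hD)).congr_deriv ?_
  field_simp
  ring

lemma hasDerivAt_interactionTerm_left {γ N P : ℝ} (hD : (γ + N + P) ^ 2 - 4 * N * P ≠ 0) :
    HasDerivAt (fun n => interactionTerm γ n P)
      (1 - (γ + N + P - 2 * P) / √((γ + N + P) ^ 2 - 4 * N * P)) N := by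
  have hD' : (γ + P + N) ^ 2 - 4 * P * N ≠ 0 := by convert hD using 1; ring
  convert hasDerivAt_interactionTerm_right hD' using 1
  · exact funext fun n => interactionTerm_comm γ n P
  · ring_nf

lemma two_mul_mul_div_lt_Nstar {r ν γ Γ μ N : ℝ} (hr : 0 < r) (hν : 0 < ν) (hγ : 0 < γ) (hμ : 0 < μ)
    (hd : 0 < Γ - 2 * μ) (hcond : Γ - 2 * μ > 2 * γ * μ / ν)
    (hN : N = ν / (2 * r) *
      (r - γ / 2 + √((r - γ / 2) ^ 2 + 4 * (r / ν) * (μ * γ ^ 2 / (Γ - 2 * μ))))) :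
    2 * μ * γ / (Γ - 2 * μ) < N := by
  set x := 2 * μ * γ / (Γ - 2 * μ)
  have hx : x / ν < 1 := by
    rw [div_lt_one hν, div_lt_iff₀ hd]
    rw [gt_iff_lt, div_lt_iff₀ hν] at hcond
    linarith
  have hquad :
      r / ν * x ^ 2 - (r - γ / 2) * x - μ * γ ^ 2 / (Γ - 2 * μ) = r * x * (x / ν - 1) := by
    simp only [x]; field_simp; ring
  have := lt_quadratic_root (a := r / ν) (by positivity)
    (hquad ▸ mul_neg_of_pos_of_neg (by positivity) (by linarith))
  convert this using 1
  rw [hN]; field_simp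

structure IsCoexistence (γ Γ μ N P Q : ℝ) : Prop where
  P_eq : P = Γ / (2 * μ) * N - Γ * γ / (Γ - 2 * μ)
  Q_eq : Q = γ + N + P - 4 * μ / Γ * P

namespace IsCoexistence

variable {γ Γ μ N P Q : ℝ}

lemma P_pos (hE : IsCoexistence γ Γ μ N P Q) (hΓ : 0 < Γ) (hμ : 0 < μ)
    (hN : 2 * μ * γ / (Γ - 2 * μ) < N) : 0 < P := by
  have hsplit : Γ * γ / (Γ - 2 * μ) = Γ / (2 * μ) * (2 * μ * γ / (Γ - 2 * μ)) := by
    field_simp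
  rw [hE.P_eq, hsplit, ← mul_sub]
  exact mul_pos (by positivity) (sub_pos.2 hN)

lemma N_sub_eq (hE : IsCoexistence γ Γ μ N P Q) (hμ : μ ≠ 0) (hΓ : Γ ≠ 0) :
    N - 2 * μ / Γ * P = 2 * μ * γ / (Γ - 2 * μ) := by
  rw [hE.P_eq]; field_simp; ring

lemma Q_eq_add (hE : IsCoexistence γ Γ μ N P Q) (hμ : μ ≠ 0) (hΓ : Γ ≠ 0)
    (hd : Γ - 2 * μ ≠ 0) :
    Q = Γ * γ / (Γ - 2 * μ) + (Γ - 2 * μ) / Γ * P := by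
  rw [hE.Q_eq, eq_add_of_sub_eq (hE.N_sub_eq hμ hΓ)]
  field_simp
  ring

lemma disc_eq_sq (hE : IsCoexistence γ Γ μ N P Q) (hμ : μ ≠ 0) (hΓ : Γ ≠ 0)
    (hd : Γ - 2 * μ ≠ 0) :
    (γ + N + P) ^ 2 - 4 * N * P = Q ^ 2 := by
  rw [hE.Q_eq, eq_add_of_sub_eq (hE.N_sub_eq hμ hΓ)]
  field_simp
  ring

lemma hasDerivAt_interactionTerm_right (hE : IsCoexistence γ Γ μ N P Q) (hμ : μ ≠ 0)
    (hΓ : Γ ≠ 0) (hd : Γ - 2 * μ ≠ 0) (hQ : 0 < Q) :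
    HasDerivAt (fun p => interactionTerm γ N p) (4 * μ * γ / ((Γ - 2 * μ) * Q)) P := by
  have hdisc := hE.disc_eq_sq hμ hΓ hd
  have hx : (Γ - 2 * μ) * (N - 2 * μ / Γ * P) = 2 * μ * γ := by
    rw [hE.N_sub_eq hμ hΓ]; field_simp
  refine (_root_.hasDerivAt_interactionTerm_right (hdisc ▸ by positivity)).congr_deriv ?_
  rw [hdisc, sqrt_sq hQ.le]
  field_simp
  linear_combination (Γ - 2 * μ) * hE.Q_eq + 2 * hx

lemma hasDerivAt_interactionTerm_left (hE : IsCoexistence γ Γ μ N P Q) (hμ : μ ≠ 0)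
    (hΓ : Γ ≠ 0) (hd : Γ - 2 * μ ≠ 0) (hQ : 0 < Q) :
    HasDerivAt (fun n => interactionTerm γ n P) (2 * (Γ - 2 * μ) * P / (Γ * Q)) N := by
  have hdisc := hE.disc_eq_sq hμ hΓ hd
  refine (_root_.hasDerivAt_interactionTerm_left (hdisc ▸ by positivity)).congr_deriv ?_
  rw [hdisc, sqrt_sq hQ.le]
  field_simp
  rw [hE.Q_eq]
  field_simp
  ring

end IsCoexistence

theorem stmt_8 (r ν γ Γ μ : ℝ) (hr : 0 < r) (hν : 0 < ν) (hγ : 0 < γ) (hΓ : 0 < Γ)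
    (hμ : 0 < μ) (hcond : Γ - 2 * μ > 2 * γ * μ / ν)
    (ΔN Nstar Pstar Qstar : ℝ)
    (hΔN : ΔN = (r - γ / 2) ^ 2 + 4 * (r / ν) * (μ * γ ^ 2 / (Γ - 2 * μ)))
    (hNs : Nstar = (ν / (2 * r)) * (r - γ / 2 + Real.sqrt ΔN))
    (hPs : Pstar = (Γ / (2 * μ)) * Nstar - Γ * γ / (Γ - 2 * μ))
    (hQ : Qstar = γ + Nstar + Pstar - (4 * μ / Γ) * Pstar)
    (F G : ℝ → ℝ → ℝ)
    (hF : ∀ N P, F N P = r * (1 - N / ν) * N -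
      (γ / 4) * ((γ + N + P) - Real.sqrt ((γ + N + P) ^ 2 - 4 * N * P)))
    (hG : ∀ N P, G N P = (Γ / 4) * ((γ + N + P) - Real.sqrt ((γ + N + P) ^ 2 - 4 * N * P))
      - μ * P) :
    (deriv (fun P => F Nstar P) Pstar = -(γ ^ 2 * μ) / (Qstar * (Γ - 2 * μ)) ∧
      deriv (fun P => F Nstar P) Pstar < 0) ∧
    (deriv (fun N => G N Pstar) Nstar = (Γ - 2 * μ) * Pstar / (2 * Qstar) ∧
      deriv (fun N => G N Pstar) Nstar > 0) ∧
    (deriv (fun P => G Nstar P) Pstar = -(μ * (Γ - 2 * μ) * Pstar) / (Γ * Qstar) ∧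
      deriv (fun P => G Nstar P) Pstar < 0) := by
  have hd : 0 < Γ - 2 * μ := (by positivity : 0 < 2 * γ * μ / ν).trans hcond
  have hE : IsCoexistence γ Γ μ Nstar Pstar Qstar := ⟨hPs, hQ⟩
  have hP0 : 0 < Pstar :=
    hE.P_pos hΓ hμ (two_mul_mul_div_lt_Nstar hr hν hγ hμ hd hcond (hΔN ▸ hNs))
  have hQeq := hE.Q_eq_add hμ.ne' hΓ.ne' hd.ne'
  have hQ0 : 0 < Qstar := by rw [hQeq]; positivity
  have hqP := hE.hasDerivAt_interactionTerm_right hμ.ne' hΓ.ne' hd.ne' hQ0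
  have hqN := hE.hasDerivAt_interactionTerm_left hμ.ne' hΓ.ne' hd.ne' hQ0
  have hJ12 : HasDerivAt (fun P => F Nstar P) (-(γ ^ 2 * μ) / (Qstar * (Γ - 2 * μ))) Pstar := by
    simp only [hF]
    refine ((hqP.const_mul (γ / 4)).const_sub _).congr_deriv ?_
    field_simp
  have hJ21 : HasDerivAt (fun N => G N Pstar) ((Γ - 2 * μ) * Pstar / (2 * Qstar)) Nstar := by
    simp only [hG]
    refine ((hqN.const_mul (Γ / 4)).sub_const _).congr_deriv ?_
    field_simp
    norm_num
  have hJ22 : HasDerivAt (fun P => G Nstar P)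
      (-(μ * (Γ - 2 * μ) * Pstar) / (Γ * Qstar)) Pstar := by
    simp only [hG]
    refine ((hqP.const_mul (Γ / 4)).sub ((hasDerivAt_id' Pstar).const_mul μ)).congr_deriv ?_
    field_simp at hQeq ⊢
    linear_combination -hQeq
  refine ⟨⟨hJ12.deriv, ?_⟩, ⟨hJ21.deriv, ?_⟩, ⟨hJ22.deriv, ?_⟩⟩
  · rw [hJ12.deriv]
    exact div_neg_of_neg_of_pos (neg_neg_of_pos (by positivity)) (by positivity)
  · rw [hJ21.deriv]; positivity
  · rw [hJ22.deriv]
    exact div_neg_of_neg_of_pos (neg_neg_of_pos (by positivity)) (by positivity)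
end

section
/- Under the conditions for existence of the coexistence equilibrium (Γ − 2μ > 2γμ/ν, all parameters positive), the determinant of the Jacobian of the reaction system at E* is strictly positive: det J* = (r/Q*²)·(1 − N*/ν)·N*·[ r·((Γ−2μ)²/(2νμγ))·N*² + 2μ√Δ_N + (γ/2)(Γ−2μ) ] > 0. -/
/-!
At `E*` the square root in the response term equals `Q*`, so both partial derivatives of the
response term are explicit rational functions of `N*`:
`(Q* - (γ + N* - P*)) / Q* = (N*(Γ - 2μ) - 2μγ) / (μ Q*)` and
`(Q* - (γ + P* - N*)) / Q* = 4μγ / ((Γ - 2μ) Q*)`. Substituting, the Jacobian determinant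
collapses to `(N*(Γ - 2μ) - 2μγ) √Δ_N / (2 Q*)`. The quadratic equation satisfied by `N*`
turns this into the stated closed form, and the coexistence condition `ν(Γ - 2μ) > 2γμ` places
`√Δ_N` strictly between `r - γ/2` and `r + γ/2`, which gives `N*(Γ - 2μ) > 2μγ`.
-/

open Real

/-- Twice the smaller root of `C² - (γ + N + P) C + N P = 0`. -/
noncomputable def complexTerm (γ N P : ℝ) : ℝ :=
  (γ + N + P) - √((γ + N + P) ^ 2 - 4 * N * P)

theorem complexTerm_comm (γ N P : ℝ) : complexTerm γ N P = complexTerm γ P N := by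
  unfold complexTerm; ring_nf

theorem hasDerivAt_complexTerm_left {γ N P Q : ℝ} (hQ : 0 < Q)
    (hQsq : (γ + N + P) ^ 2 - 4 * N * P = Q ^ 2) :
    HasDerivAt (fun x => complexTerm γ x P) ((Q - (γ + N - P)) / Q) N := by
  have hlin : HasDerivAt (fun x => γ + x + P) 1 N := ((hasDerivAt_id' N).const_add γ).add_const P
  have hrad : HasDerivAt (fun x => (γ + x + P) ^ 2 - 4 * x * P) (2 * (γ + N - P)) N :=
    ((hlin.fun_pow 2).sub (((hasDerivAt_id' N).const_mul 4).mul_const P)).congr_deriv (by ring)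
  have hsqrt := hrad.sqrt (by rw [hQsq]; positivity)
  rw [hQsq, sqrt_sq hQ.le] at hsqrt
  exact (hlin.sub hsqrt).congr_deriv (by field_simp)

theorem hasDerivAt_complexTerm_right {γ N P Q : ℝ} (hQ : 0 < Q)
    (hQsq : (γ + N + P) ^ 2 - 4 * N * P = Q ^ 2) :
    HasDerivAt (fun y => complexTerm γ N y) ((Q - (γ + P - N)) / Q) P := by
  simp only [complexTerm_comm γ N]
  exact hasDerivAt_complexTerm_left hQ (by linear_combination hQsq)

theorem hasDerivAt_logistic (r ν N : ℝ) :
    HasDerivAt (fun x => r * (1 - x / ν) * x) (r * (1 - 2 * N / ν)) N :=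
  ((((hasDerivAt_id' N).div_const ν).const_sub 1).const_mul r |>.fun_mul
    (hasDerivAt_id' N)).congr_deriv (by ring)

theorem jacobian_det_eq {r ν γ Γ μ N P Q : ℝ} {F G : ℝ → ℝ → ℝ}
    (hF : ∀ N P, F N P = r * (1 - N / ν) * N - γ / 4 * complexTerm γ N P)
    (hG : ∀ N P, G N P = Γ / 4 * complexTerm γ N P - μ * P)
    (hQ : 0 < Q) (hQsq : (γ + N + P) ^ 2 - 4 * N * P = Q ^ 2) :
    deriv (fun x => F x P) N * deriv (fun y => G N y) P -
        deriv (fun y => F N y) P * deriv (fun x => G x P) N =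
      r * (1 - 2 * N / ν) * (Γ / 4 * ((Q - (γ + P - N)) / Q) - μ) +
        γ * μ / 4 * ((Q - (γ + N - P)) / Q) := by
  obtain rfl : F = fun N P => r * (1 - N / ν) * N - γ / 4 * complexTerm γ N P :=
    funext fun N => funext fun P => hF N P
  obtain rfl : G = fun N P => Γ / 4 * complexTerm γ N P - μ * P :=
    funext fun N => funext fun P => hG N P
  have hN := hasDerivAt_complexTerm_left hQ hQsq
  have hP := hasDerivAt_complexTerm_right hQ hQsq
  rw [((hasDerivAt_logistic r ν N).fun_sub (hN.const_mul _)).deriv,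
    ((hP.const_mul _).fun_sub ((hasDerivAt_id' P).const_mul μ)).deriv,
    ((hP.const_mul _).const_sub _).deriv, ((hN.const_mul _).sub_const _).deriv]
  ring

section Coexistence

variable {r ν γ Γ μ N P Q s : ℝ}

theorem coexistence_quadratic (hr : r ≠ 0) (hν : ν ≠ 0) (hD : Γ - 2 * μ ≠ 0)
    (hs : s ^ 2 = (r - γ / 2) ^ 2 + 4 * (r / ν) * (μ * γ ^ 2 / (Γ - 2 * μ)))
    (hN : N = ν / (2 * r) * (r - γ / 2 + s)) :
    N * (Γ - 2 * μ) * (s - r + γ / 2) = 2 * μ * γ ^ 2 :=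
  calc N * (Γ - 2 * μ) * (s - r + γ / 2)
      = ν * (Γ - 2 * μ) / (2 * r) * (s ^ 2 - (r - γ / 2) ^ 2) := by rw [hN]; ring
    _ = 2 * μ * γ ^ 2 := by rw [hs]; field_simp; ring

theorem coexistence_margin_pos (hr : 0 < r) (hν : 0 < ν) (hγ : 0 < γ) (hμ : 0 < μ)
    (hcond : 2 * γ * μ < ν * (Γ - 2 * μ)) (hs0 : 0 ≤ s)
    (hs : s ^ 2 = (r - γ / 2) ^ 2 + 4 * (r / ν) * (μ * γ ^ 2 / (Γ - 2 * μ)))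
    (hN : N = ν / (2 * r) * (r - γ / 2 + s)) :
    0 < N * (Γ - 2 * μ) - 2 * μ * γ := by
  have hD : 0 < Γ - 2 * μ :=
    pos_of_mul_pos_right ((by positivity : (0 : ℝ) < 2 * γ * μ).trans hcond) hν.le
  have hsmall : 4 * (r / ν) * (μ * γ ^ 2 / (Γ - 2 * μ)) < 2 * r * γ := by
    rw [show 4 * (r / ν) * (μ * γ ^ 2 / (Γ - 2 * μ)) =
        2 * r * γ * (2 * γ * μ / (ν * (Γ - 2 * μ))) by field_simp; ring]
    exact mul_lt_of_lt_one_right (by positivity) ((div_lt_one (by positivity)).mpr hcond)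
  have hlow : r - γ / 2 < s := by
    refine lt_of_abs_lt (abs_lt_of_sq_lt_sq ?_ hs0)
    rw [hs]; linarith [(by positivity : 0 < 4 * (r / ν) * (μ * γ ^ 2 / (Γ - 2 * μ)))]
  have hup : s < r + γ / 2 := by
    refine lt_of_pow_lt_pow_left₀ 2 (by positivity) ?_
    nlinarith
  have hquad := coexistence_quadratic hr.ne' hν.ne' hD.ne' hs hN
  have ht : 0 < s - r + γ / 2 := by linarith
  have hprod : 0 < N * (Γ - 2 * μ) * (s - r + γ / 2) := by rw [hquad]; positivity
  have hND : 0 < N * (Γ - 2 * μ) := pos_of_mul_pos_left hprod ht.le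
  have : 2 * μ * γ * γ < N * (Γ - 2 * μ) * γ := by
    nlinarith [mul_lt_mul_of_pos_left (by linarith : s - r + γ / 2 < γ) hND]
  exact sub_pos.mpr (lt_of_mul_lt_mul_right this hγ.le)

theorem coexistence_Q_eq (hΓ : Γ ≠ 0) (hμ : μ ≠ 0) (hD : Γ - 2 * μ ≠ 0)
    (hP : P = Γ / (2 * μ) * N - Γ * γ / (Γ - 2 * μ)) (hQ : Q = γ + N + P - 4 * μ / Γ * P) :
    Q = N * (Γ - 2 * μ) / (2 * μ) + 2 * μ * γ / (Γ - 2 * μ) := by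
  rw [hQ, hP]; field_simp; ring

theorem coexistence_radicand (hμ : μ ≠ 0) (hD : Γ - 2 * μ ≠ 0)
    (hP : P = Γ / (2 * μ) * N - Γ * γ / (Γ - 2 * μ))
    (hQ : Q = N * (Γ - 2 * μ) / (2 * μ) + 2 * μ * γ / (Γ - 2 * μ)) :
    (γ + N + P) ^ 2 - 4 * N * P = Q ^ 2 := by
  rw [hQ, hP]; field_simp; ring

theorem coexistence_gap_left (hμ : μ ≠ 0) (hD : Γ - 2 * μ ≠ 0)
    (hP : P = Γ / (2 * μ) * N - Γ * γ / (Γ - 2 * μ))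
    (hQ : Q = N * (Γ - 2 * μ) / (2 * μ) + 2 * μ * γ / (Γ - 2 * μ)) :
    Q - (γ + N - P) = (N * (Γ - 2 * μ) - 2 * μ * γ) / μ := by
  rw [hQ, hP]; field_simp; ring

theorem coexistence_gap_right (hμ : μ ≠ 0) (hD : Γ - 2 * μ ≠ 0)
    (hP : P = Γ / (2 * μ) * N - Γ * γ / (Γ - 2 * μ))
    (hQ : Q = N * (Γ - 2 * μ) / (2 * μ) + 2 * μ * γ / (Γ - 2 * μ)) :
    Q - (γ + P - N) = 4 * μ * γ / (Γ - 2 * μ) := by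
  rw [hQ, hP]; field_simp; ring

theorem coexistence_det_eq (hμ : μ ≠ 0) (hD : Γ - 2 * μ ≠ 0) (hQ0 : Q ≠ 0)
    (hP : P = Γ / (2 * μ) * N - Γ * γ / (Γ - 2 * μ))
    (hQ : Q = N * (Γ - 2 * μ) / (2 * μ) + 2 * μ * γ / (Γ - 2 * μ)) :
    r * (1 - 2 * N / ν) * (Γ / 4 * ((Q - (γ + P - N)) / Q) - μ) +
        γ * μ / 4 * ((Q - (γ + N - P)) / Q) =
      (N * (Γ - 2 * μ) - 2 * μ * γ) * (2 * r * N / ν - r + γ / 2) / (2 * Q) := by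
  have hJ22 : Γ / 4 * ((Q - (γ + P - N)) / Q) - μ =
      -(N * (Γ - 2 * μ) - 2 * μ * γ) / (2 * Q) := by
    rw [coexistence_gap_right hμ hD hP hQ]
    calc _ = μ * (Γ * γ / (Γ - 2 * μ) - Q) / Q := by field_simp
      _ = _ := by
        rw [show Γ * γ / (Γ - 2 * μ) - Q = -(N * (Γ - 2 * μ) - 2 * μ * γ) / (2 * μ) by
          rw [hQ]; field_simp; ring]
        field_simp
  rw [hJ22, coexistence_gap_left hμ hD hP hQ]
  field_simp
  ring

theorem coexistence_det_formula (hν : ν ≠ 0) (hγ : γ ≠ 0) (hμ : μ ≠ 0)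
    (hD : Γ - 2 * μ ≠ 0) (hQ0 : Q ≠ 0) (hs : s = 2 * r * N / ν - r + γ / 2)
    (hquad : N * (Γ - 2 * μ) * (s - r + γ / 2) = 2 * μ * γ ^ 2)
    (hQ : Q = N * (Γ - 2 * μ) / (2 * μ) + 2 * μ * γ / (Γ - 2 * μ)) :
    (r / Q ^ 2) * (1 - N / ν) * N *
        (r * ((Γ - 2 * μ) ^ 2 / (2 * ν * μ * γ)) * N ^ 2 + 2 * μ * s +
          (γ / 2) * (Γ - 2 * μ)) =
      (N * (Γ - 2 * μ) - 2 * μ * γ) * s / (2 * Q) := by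
  have hlogistic :
      r * (1 - N / ν) * N = γ * (N * (Γ - 2 * μ) - 2 * μ * γ) / (2 * (Γ - 2 * μ)) := by
    rw [hs] at hquad; field_simp at hquad ⊢; linear_combination (-1 / 2) * hquad
  have hbracket : r * ((Γ - 2 * μ) ^ 2 / (2 * ν * μ * γ)) * N ^ 2 + 2 * μ * s +
      (γ / 2) * (Γ - 2 * μ) = s * (Γ - 2 * μ) * Q / γ := by
    rw [hQ, hs]; rw [hs] at hquad; field_simp at hquad ⊢
    linear_combination (-(Γ - 2 * μ) / 2) * hquad
  calc _ = r * (1 - N / ν) * N * (r * ((Γ - 2 * μ) ^ 2 / (2 * ν * μ * γ)) * N ^ 2 +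
          2 * μ * s + (γ / 2) * (Γ - 2 * μ)) / Q ^ 2 := by ring
    _ = _ := by rw [hlogistic, hbracket]; field_simp

end Coexistence

theorem stmt_9 (r ν γ Γ μ : ℝ) (hr : 0 < r) (hν : 0 < ν) (hγ : 0 < γ) (hΓ : 0 < Γ)
    (hμ : 0 < μ) (hcond : Γ - 2 * μ > 2 * γ * μ / ν)
    (ΔN Nstar Pstar Qstar : ℝ)
    (hΔN : ΔN = (r - γ / 2) ^ 2 + 4 * (r / ν) * (μ * γ ^ 2 / (Γ - 2 * μ)))
    (hNs : Nstar = (ν / (2 * r)) * (r - γ / 2 + Real.sqrt ΔN))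
    (hPs : Pstar = (Γ / (2 * μ)) * Nstar - Γ * γ / (Γ - 2 * μ))
    (hQ : Qstar = γ + Nstar + Pstar - (4 * μ / Γ) * Pstar)
    (F G : ℝ → ℝ → ℝ)
    (hF : ∀ N P, F N P = r * (1 - N / ν) * N -
      (γ / 4) * ((γ + N + P) - Real.sqrt ((γ + N + P) ^ 2 - 4 * N * P)))
    (hG : ∀ N P, G N P = (Γ / 4) * ((γ + N + P) - Real.sqrt ((γ + N + P) ^ 2 - 4 * N * P))
      - μ * P)
    (J11 J12 J21 J22 : ℝ)
    (hJ11 : J11 = deriv (fun N => F N Pstar) Nstar)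
    (hJ12 : J12 = deriv (fun P => F Nstar P) Pstar)
    (hJ21 : J21 = deriv (fun N => G N Pstar) Nstar)
    (hJ22 : J22 = deriv (fun P => G Nstar P) Pstar) :
    J11 * J22 - J12 * J21 =
      (r / Qstar ^ 2) * (1 - Nstar / ν) * Nstar *
        (r * ((Γ - 2 * μ) ^ 2 / (2 * ν * μ * γ)) * Nstar ^ 2 + 2 * μ * Real.sqrt ΔN +
          (γ / 2) * (Γ - 2 * μ)) ∧
    0 < J11 * J22 - J12 * J21 := by
  have hcond' : 2 * γ * μ < ν * (Γ - 2 * μ) := by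
    rw [gt_iff_lt, div_lt_iff₀ hν] at hcond; linarith
  have hD : 0 < Γ - 2 * μ := (by positivity : (0 : ℝ) < 2 * γ * μ / ν).trans hcond
  have hsq : √ΔN ^ 2 = (r - γ / 2) ^ 2 + 4 * (r / ν) * (μ * γ ^ 2 / (Γ - 2 * μ)) := by
    rw [sq_sqrt (by rw [hΔN]; positivity), hΔN]
  have hs : √ΔN = 2 * r * Nstar / ν - r + γ / 2 := by rw [hNs]; field_simp; ring
  have hmargin := coexistence_margin_pos hr hν hγ hμ hcond' (sqrt_nonneg _) hsq hNs
  have hNpos : 0 < Nstar :=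
    pos_of_mul_pos_left (by linarith [mul_pos hμ hγ] : 0 < Nstar * (Γ - 2 * μ)) hD.le
  have hQN := coexistence_Q_eq hΓ.ne' hμ.ne' hD.ne' hPs hQ
  have hQpos : 0 < Qstar := by rw [hQN]; positivity
  have hdet : J11 * J22 - J12 * J21 =
      (Nstar * (Γ - 2 * μ) - 2 * μ * γ) * √ΔN / (2 * Qstar) := by
    rw [hJ11, hJ12, hJ21, hJ22, jacobian_det_eq hF hG hQpos
      (coexistence_radicand hμ.ne' hD.ne' hPs hQN), hs]
    exact coexistence_det_eq hμ.ne' hD.ne' hQpos.ne' hPs hQN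
  have hquad := coexistence_quadratic hr.ne' hν.ne' hD.ne' hsq hNs
  refine ⟨hdet.trans
    (coexistence_det_formula hν.ne' hγ.ne' hμ.ne' hD.ne' hQpos.ne' hs hquad hQN).symm, ?_⟩
  rw [hdet]
  exact div_pos (mul_pos hmargin (sqrt_pos.mpr (by rw [hΔN]; positivity))) (by positivity)
end

section
/- Under the coexistence-equilibrium assumptions (r, ν, γ, Γ, μ > 0, Γ − 2μ > 2γμ/ν) and D₂ > D₃ > 0, D₁ > 0, the coefficients B_L = D_P·J*₁₁ + D₁J*₂₂ and B_C = J*_{Δ22}·J*₁₁ + D₁J*₂₂ − J*₁₂·J*_{Δ21} satisfy B_L > B_C, and the inequality B_L > B_C is equivalent to −√Δ_N·(γ − ((Γ−2μ)/(2μ))N*) > 0, which always holds since γ − ((Γ−2μ)/(2μ))N* < 0. -/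
set_option maxHeartbeats 1000000


theorem stmt_14 (r ν γ Γ μ D1 D2 D3 : ℝ)
    (hr : 0 < r) (hν : 0 < ν) (hγ : 0 < γ) (hΓ : 0 < Γ) (hμ : 0 < μ)
    (hcond : Γ - 2 * μ > 2 * γ * μ / ν)
    (hD1 : 0 < D1) (hD3 : 0 < D3) (hD23 : D3 < D2)
    (ΔN Nstar Pstar Qstar J11 J12 J22 JΔ21 JΔ22 DP BL BC : ℝ)
    (hΔN : ΔN = (r - γ / 2) ^ 2 + 4 * (r / ν) * (μ * γ ^ 2 / (Γ - 2 * μ)))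
    (hNs : Nstar = (ν / (2 * r)) * (r - γ / 2 + Real.sqrt ΔN))
    (hPs : Pstar = (Γ / (2 * μ)) * Nstar - Γ * γ / (Γ - 2 * μ))
    (hQ : Qstar = ((Γ - 2 * μ) / (2 * μ)) * Nstar + 2 * μ * γ / (Γ - 2 * μ))
    (hJ11 : J11 = μ * γ ^ 2 * Γ / ((Γ - 2 * μ) ^ 2 * Nstar + 4 * μ ^ 2 * γ) - Real.sqrt ΔN)
    (hJ12 : J12 = -(γ ^ 2 * μ) / (Qstar * (Γ - 2 * μ)))
    (hJ22 : J22 = -(μ * (Γ - 2 * μ) * Pstar) / (Γ * Qstar))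
    (hJΔ21 : JΔ21 = -((D2 - D3) / Qstar) * ((Γ - 2 * μ) / Γ) * Pstar)
    (hJΔ22 : JΔ22 = (D2 / Qstar) * (γ + Pstar * (Γ - 2 * μ) / Γ) +
      (D3 / Qstar) * (2 * μ * γ / (Γ - 2 * μ)))
    (hDP : DP = D2 * (1 - 2 * μ / Γ) + D3 * (2 * μ / Γ))
    (hBL : BL = DP * J11 + D1 * J22)
    (hBC : BC = JΔ22 * J11 + D1 * J22 - J12 * JΔ21) :
    BL > BC ∧
    (BL > BC ↔ -Real.sqrt ΔN * (γ - ((Γ - 2 * μ) / (2 * μ)) * Nstar) > 0) ∧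
    γ - ((Γ - 2 * μ) / (2 * μ)) * Nstar < 0 := by
  have hm : 0 < Γ - 2 * μ := lt_trans (by positivity) hcond
  have hmν : 2 * γ * μ < (Γ - 2 * μ) * ν := by
    rw [gt_iff_lt, div_lt_iff₀ hν] at hcond; linarith
  have hΔpos : 0 < ΔN := by
    rw [hΔN]
    have h0 : 0 < 4 * (r / ν) * (μ * γ ^ 2 / (Γ - 2 * μ)) := by positivity
    linarith only [h0, sq_nonneg (r - γ / 2)]
  set s := Real.sqrt ΔN with hsdef
  have hs : 0 < s := Real.sqrt_pos.mpr hΔpos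
  have hs2 : s ^ 2 = ΔN := Real.sq_sqrt hΔpos.le
  -- key quadratic relation with denominators cleared
  have hkeyq : s ^ 2 * ν * (Γ - 2 * μ) =
      (r - γ / 2) ^ 2 * ν * (Γ - 2 * μ) + 4 * r * μ * γ ^ 2 := by
    rw [hs2, hΔN]; field_simp
  -- Nstar > 2μγ/(Γ-2μ)
  have hNbig : 2 * μ * γ < (Γ - 2 * μ) * Nstar := by
    have hA : 0 < (Γ - 2 * μ) * ν := mul_pos hm hν
    have h2 : ((Γ - 2 * μ) * ν * s) ^ 2 = ((Γ - 2 * μ) * ν * (r - γ / 2)) ^ 2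
        + 4 * r * μ * γ ^ 2 * ((Γ - 2 * μ) * ν) := by
      linear_combination (ν * (Γ - 2 * μ)) * hkeyq
    have hA2 : 0 < (Γ - 2 * μ) * ν - 2 * μ * γ := by linarith only [hmν]
    have hprod : 0 < r * r * (μ * γ) * ((Γ - 2 * μ) * ν - 2 * μ * γ) :=
      mul_pos (mul_pos (mul_pos hr hr) (mul_pos hμ hγ)) hA2
    have hsq : (4 * r * μ * γ - (Γ - 2 * μ) * ν * (r - γ / 2)) ^ 2
        < ((Γ - 2 * μ) * ν * s) ^ 2 := by nlinarith [h2, hprod, sq_nonneg s]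
    have h3 : 4 * r * μ * γ - (Γ - 2 * μ) * ν * (r - γ / 2) < (Γ - 2 * μ) * ν * s :=
      lt_of_pow_lt_pow_left₀ 2 (mul_pos hA hs).le hsq
    rw [hNs]
    have h1 : (Γ - 2 * μ) * ((ν / (2 * r)) * (r - γ / 2 + s)) =
        ((Γ - 2 * μ) * ν * (r - γ / 2) + (Γ - 2 * μ) * ν * s) / (2 * r) := by
      field_simp
    rw [h1, lt_div_iff₀ (by positivity)]
    linarith only [h3]
  have hX : γ - ((Γ - 2 * μ) / (2 * μ)) * Nstar < 0 := by
    have h : ((Γ - 2 * μ) / (2 * μ)) * Nstar = ((Γ - 2 * μ) * Nstar) / (2 * μ) := by ring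
    rw [h, sub_neg, lt_div_iff₀ (by positivity)]
    linarith only [hNbig]
  have hNpos : 0 < Nstar := by
    rcases lt_or_ge 0 Nstar with h | h
    · exact h
    · exact absurd hNbig (not_lt.mpr (le_trans (mul_nonpos_of_nonneg_of_nonpos hm.le h)
        (by positivity)))
  have hQpos : 0 < Qstar := by rw [hQ]; positivity
  have hQne : Qstar ≠ 0 := ne_of_gt hQpos
  have hDen : (Γ - 2 * μ) ^ 2 * Nstar + 4 * μ ^ 2 * γ = 2 * μ * (Γ - 2 * μ) * Qstar := by
    rw [hQ]; field_simp; ring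
  have hQexprne : ((Γ - 2 * μ) / (2 * μ)) * Nstar + 2 * μ * γ / (Γ - 2 * μ) ≠ 0 := by
    rw [← hQ]; exact hQne
  have hDenne : (Γ - 2 * μ) ^ 2 * Nstar + 4 * μ ^ 2 * γ ≠ 0 := by positivity
  have hkey : BL - BC = (2 * μ * (D2 - D3) / (Γ * Qstar)) *
      (-s * (γ - ((Γ - 2 * μ) / (2 * μ)) * Nstar)) := by
    rw [hBL, hBC, hDP, hJΔ22, hJΔ21, hJ12, hJ11, hPs, hQ]
    field_simp [hμ.ne', hΓ.ne', hm.ne', hQexprne, hDenne]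
    ring
  have hRHS : -s * (γ - ((Γ - 2 * μ) / (2 * μ)) * Nstar) > 0 := by
    have h0 := mul_pos hs (neg_pos.mpr hX)
    linarith only [h0]
  have hfac : 0 < 2 * μ * (D2 - D3) / (Γ * Qstar) := by
    exact div_pos (mul_pos (by linarith only [hμ]) (by linarith only [hD23])) (by positivity)
  have hBLBC : BL > BC := by linarith only [hkey, mul_pos hfac hRHS]
  exact ⟨hBLBC, iff_of_true hBLBC hRHS, hX⟩
end

section
/- Let J*₁₁ < 0, J*₂₂ < 0, J*₁₂ < 0, J*₂₁ > 0, J*_{Δ11} > 0, J*_{Δ22} > 0, J*_{Δ21} ≤ 0, J*_{Δ12} = 0, and suppose det J* = J*₁₁J*₂₂ − J*₁₂J*₂₁ > 0. Then for every λ ≥ 0 the determinant of the characteristic matrix, det M(λ) = det J* − (J*₁₁J*_{Δ22} + J*₂₂J*_{Δ11} − J*₁₂J*_{Δ21})λ + J*_{Δ11}J*_{Δ22}λ², is strictly positive; in particular no Turing instability can occur when J*₁₁ < 0. -/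
theorem stmt_16 (J11 J12 J21 J22 JΔ11 JΔ12 JΔ21 JΔ22 : ℝ)
    (h11 : J11 < 0) (h22 : J22 < 0) (h12 : J12 < 0) (h21 : 0 < J21)
    (hΔ11 : 0 < JΔ11) (hΔ22 : 0 < JΔ22) (hΔ21 : JΔ21 ≤ 0) (hΔ12 : JΔ12 = 0)
    (hdet : 0 < J11 * J22 - J12 * J21) :
    ∀ l : ℝ, 0 ≤ l →
      0 < (J11 * J22 - J12 * J21) - (J11 * JΔ22 + J22 * JΔ11 - J12 * JΔ21) * l +
        JΔ11 * JΔ22 * l ^ 2 := by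
  intro l hl
  nlinarith [mul_nonneg (mul_nonneg (neg_nonneg.2 h11.le) hΔ22.le) hl, mul_nonneg (mul_nonneg (neg_nonneg.2 h22.le) hΔ11.le) hl, mul_nonneg (mul_nonneg (neg_nonneg.2 h12.le) (neg_nonneg.2 hΔ21)) hl, mul_nonneg (mul_nonneg hΔ11.le hΔ22.le) (mul_nonneg hl hl), sq_nonneg l]
end

section
/- Let Γ > 2μ > 0 and γ > 0, and suppose N*, P* > 0 satisfy ΓN*/(γ + N* + P* + √((γ+N*+P*)² − 4N*P*)) = μ. Then ΓN* − μ(γ + N* + P*) > 0 and P* = (Γ/(2μ))N* − Γγ/(Γ−2μ). -/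
theorem stmt_17 (γ Γ μ Nstar Pstar : ℝ) (hγ : 0 < γ) (hμ : 0 < μ) (hΓμ : Γ > 2 * μ)
    (hNs : 0 < Nstar) (hPs : 0 < Pstar)
    (heq : Γ * Nstar / (γ + Nstar + Pstar +
      Real.sqrt ((γ + Nstar + Pstar) ^ 2 - 4 * Nstar * Pstar)) = μ) :
    Γ * Nstar - μ * (γ + Nstar + Pstar) > 0 ∧
    Pstar = (Γ / (2 * μ)) * Nstar - Γ * γ / (Γ - 2 * μ) := by
  set B := γ + Nstar + Pstar with hB
  have hB0 : 0 < B := by positivity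
  have hΔ : 0 < B ^ 2 - 4 * Nstar * Pstar := by nlinarith [sq_nonneg (Nstar - Pstar)]
  set s := Real.sqrt (B ^ 2 - 4 * Nstar * Pstar) with hs
  have hs0 : 0 < s := Real.sqrt_pos.mpr hΔ
  have hsq : s ^ 2 = B ^ 2 - 4 * Nstar * Pstar := Real.sq_sqrt hΔ.le
  have hden : 0 < B + s := by linarith
  have hmain : Γ * Nstar = μ * (B + s) := by
    field_simp at heq; linarith [heq]
  have h1 : Γ * Nstar - μ * B > 0 := by nlinarith
  refine ⟨h1, ?_⟩
  have hms : μ * s = Γ * Nstar - μ * B := by linarith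
  have hsq2 : μ ^ 2 * (B ^ 2 - 4 * Nstar * Pstar) = (Γ * Nstar - μ * B) ^ 2 := by
    calc μ ^ 2 * (B ^ 2 - 4 * Nstar * Pstar) = (μ * s) ^ 2 := by rw [← hsq]; ring
    _ = (Γ * Nstar - μ * B) ^ 2 := by rw [hms]
  have key : Γ ^ 2 * Nstar - 2 * Γ * μ * B + 4 * μ ^ 2 * Pstar = 0 := by
    have hN : Nstar * (Γ ^ 2 * Nstar - 2 * Γ * μ * B + 4 * μ ^ 2 * Pstar) = 0 := by
      nlinarith [hsq2]
    rcases mul_eq_zero.mp hN with h | h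
    · exact absurd h hNs.ne'
    · exact h
  have hμ' : (2 * μ) ≠ 0 := by positivity
  have hΓ2 : Γ - 2 * μ ≠ 0 := by linarith
  field_simp
  rw [hB] at key
  linarith [key, mul_comm Γ Nstar]
end
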